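/- Let k > 1 be an integer and w the infinite binary word with 1-distribution function G(n) = k^{n-1}. Then the subword complexity of w satisfies f_w(n) = Θ(n): there exist positive constants c₁, c₂ independent of k such that c₁ n ≤ f_w(n) ≤ c₂ n for all sufficiently large n. -/

import Mathlib

/-- `u` occurs in `w` starting at position `i` (positions are 1-indexed). -/
def FactorAt (w : ℕ → Fin 2) (i : ℕ) (u : List (Fin 2)) : Prop :=
  u = (List.range u.length).map (fun k => w (i + k))

/-- `u` is a subword (factor) of the infinite word `w`. -/
def IsFactor (w : ℕ → Fin 2) (u : List (Fin 2)) : Prop :=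
  ∃ i, 1 ≤ i ∧ FactorAt w i u

/-- The subword complexity function of `w`. -/
noncomputable def complexity (w : ℕ → Fin 2) (n : ℕ) : ℕ :=
  Set.ncard {u : List (Fin 2) | u.length = n ∧ IsFactor w u}

/-- `G` is the 1-distribution function of `w`: `G 0 = 0` and `G i` is the
position of the `i`-th `1` of `w` (positions 1-indexed). -/
def OneDistrib (w : ℕ → Fin 2) (G : ℕ → ℕ) : Prop :=
  G 0 = 0 ∧ StrictMono G ∧ ∀ p, 1 ≤ p → (w p = 1 ↔ ∃ i, 1 ≤ i ∧ G i = p)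

/-- The gap function associated with a 1-distribution function `G`. -/
def gap (G : ℕ → ℕ) (i : ℕ) : ℕ := G i - G (i - 1)

/-- The gap function is strictly increasing. -/
def GapIncreasing (G : ℕ → ℕ) : Prop :=
  ∀ i, 1 ≤ i → gap G i < gap G (i + 1)

/-- `u` is a right special factor of `w`. -/
def RightSpecial (w : ℕ → Fin 2) (u : List (Fin 2)) : Prop :=
  IsFactor w (u ++ [0]) ∧ IsFactor w (u ++ [1])

/-!
Every window of length `n` of `w` that starts after position `n` contains at most one `1`:
two powers `k ^ a < k ^ b` are at distance at least `k ^ a`. Hence a factor of length `n` is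
either one of the `n` windows starting at positions `1, …, n` or a word with at most one `1`,
which gives `f_w(n) ≤ 2n + 1`. Conversely each of the `n` words with a single `1` occurs,
centred at `k ^ (n + 1)`, whose neighbouring powers are farther than `n` away; so `n ≤ f_w(n)`.
-/

open Finset

def window (w : ℕ → Fin 2) (i n : ℕ) : List (Fin 2) :=
  (List.range n).map fun t => w (i + t)

/-- The word of length `n` whose only `1` is at position `j`; it is all zeros when `n ≤ j`. -/
def unitWord (n j : ℕ) : List (Fin 2) :=
  (List.range n).map fun t => if t = j then 1 else 0

@[simp] lemma length_window (w : ℕ → Fin 2) (i n : ℕ) : (window w i n).length = n := by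
  simp [window]

lemma factors_eq_image_window (w : ℕ → Fin 2) (n : ℕ) :
    {u : List (Fin 2) | u.length = n ∧ IsFactor w u} = (window w · n) '' Set.Ici 1 := by
  ext u
  constructor
  · rintro ⟨rfl, i, hi, hu⟩
    exact ⟨i, hi, hu.symm⟩
  · rintro ⟨i, hi, rfl⟩
    exact ⟨length_window w i n, i, hi, by rw [FactorAt, length_window]; rfl⟩

lemma complexity_eq_ncard_image_window (w : ℕ → Fin 2) (n : ℕ) :
    complexity w n = ((window w · n) '' Set.Ici 1).ncard := by
  rw [complexity, factors_eq_image_window]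

lemma window_eq_unitWord {w : ℕ → Fin 2} {i n j : ℕ}
    (h : ∀ t < n, w (i + t) = 1 ↔ t = j) : window w i n = unitWord n j := by
  refine List.map_congr_left fun t ht => ?_
  have hone := h t (List.mem_range.1 ht)
  split_ifs with htj
  · exact hone.2 htj
  · have := mt hone.1 htj
    omega

lemma unitWord_injOn (n : ℕ) : Set.InjOn (unitWord n) (Set.Iio n) := by
  intro j hj j' _ h
  have hj1 := congrArg (·[j]?) h
  simp only [unitWord, List.getElem?_map, List.getElem?_range hj, Option.map_some,
    Option.some.injEq] at hj1
  by_contra hne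
  simp [hne] at hj1

lemma exists_window_eq_unitWord {w : ℕ → Fin 2}
    (hw : ∀ p q, 0 < p → p < q → w p = 1 → w q = 1 → 2 * p ≤ q) {i n : ℕ} (hi : n < i) :
    ∃ j ≤ n, window w i n = unitWord n j := by
  by_cases h : ∃ j < n, w (i + j) = 1
  · obtain ⟨j, hj, hwj⟩ := h
    refine ⟨j, hj.le, window_eq_unitWord fun t ht => ⟨fun hwt => ?_, by rintro rfl; exact hwj⟩⟩
    rcases lt_trichotomy t j with htj | rfl | htj
    · have := hw _ _ (by omega) (by omega) hwt hwj
      omega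
    · rfl
    · have := hw _ _ (by omega) (by omega) hwj hwt
      omega
  · push Not at h
    exact ⟨n, le_rfl, window_eq_unitWord fun t ht => ⟨fun h1 => absurd h1 (h t ht), by omega⟩⟩

lemma complexity_le_of_two_mul_le {w : ℕ → Fin 2}
    (hw : ∀ p q, 0 < p → p < q → w p = 1 → w q = 1 → 2 * p ≤ q) (n : ℕ) :
    complexity w n ≤ 2 * n + 1 := by
  classical
  set F := (Icc 1 n).image (window w · n) ∪ (range (n + 1)).image (unitWord n)
  have hsub : (window w · n) '' Set.Ici 1 ⊆ F := by
    rintro _ ⟨i, hi, rfl⟩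
    rcases le_or_gt i n with hin | hin
    · exact mem_union_left _ (mem_image_of_mem _ (mem_Icc.2 ⟨hi, hin⟩))
    · obtain ⟨j, hj, he⟩ := exists_window_eq_unitWord hw hin
      exact mem_union_right _ (mem_image.2 ⟨j, mem_range.2 (by omega), he.symm⟩)
  calc complexity w n ≤ F.card := by
        rw [complexity_eq_ncard_image_window, ← Set.ncard_coe_finset]
        exact Set.ncard_le_ncard hsub F.finite_toSet
    _ ≤ n + (n + 1) := by
        refine (card_union_le _ _).trans (add_le_add ?_ ?_)
        · simpa using card_image_le (s := Icc 1 n) (f := (window w · n))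
        · simpa using card_image_le (s := range (n + 1)) (f := unitWord n)
    _ = 2 * n + 1 := by ring

lemma two_mul_pow_le_pow {k a b : ℕ} (hk : 1 < k) (h : a < b) : 2 * k ^ a ≤ k ^ b :=
  calc 2 * k ^ a ≤ k * k ^ a := Nat.mul_le_mul_right _ hk
    _ = k ^ (a + 1) := (pow_succ' k a).symm
    _ ≤ k ^ b := Nat.pow_le_pow_right (by omega) h

lemma two_mul_le_of_ones_eq_pow {k : ℕ} {w : ℕ → Fin 2} (hk : 1 < k)
    (hw : ∀ p, 0 < p → (w p = 1 ↔ ∃ m, k ^ m = p)) :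
    ∀ p q, 0 < p → p < q → w p = 1 → w q = 1 → 2 * p ≤ q := by
  intro p q hp hpq hwp hwq
  obtain ⟨a, rfl⟩ := (hw p hp).1 hwp
  obtain ⟨b, rfl⟩ := (hw _ (by omega)).1 hwq
  exact two_mul_pow_le_pow hk ((Nat.pow_lt_pow_iff_right hk).1 hpq)

lemma eq_succ_of_pow_near_pow_succ {k a m : ℕ} (hk : 1 < k)
    (h₁ : k ^ (a + 1) < k ^ m + k ^ a) (h₂ : k ^ m < 2 * k ^ (a + 1)) : m = a + 1 := by
  rcases lt_trichotomy m (a + 1) with h | h | h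
  · have := Nat.pow_le_pow_right (n := k) (by omega) (Nat.lt_succ_iff.1 h)
    have := two_mul_pow_le_pow hk (Nat.lt_add_one a)
    omega
  · exact h
  · have := two_mul_pow_le_pow hk h
    omega

lemma window_eq_unitWord_at_pow {k : ℕ} {w : ℕ → Fin 2} (hk : 1 < k)
    (hw : ∀ p, 0 < p → (w p = 1 ↔ ∃ m, k ^ m = p)) {n j : ℕ} (hj : j < n) :
    window w (k ^ (n + 1) - j) n = unitWord n j := by
  have hn : n < k ^ n := Nat.lt_pow_self hk
  have hkn := two_mul_pow_le_pow hk (Nat.lt_add_one n)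
  refine window_eq_unitWord fun t ht => ?_
  rw [hw _ (by omega)]
  constructor
  · rintro ⟨m, hm⟩
    obtain rfl := eq_succ_of_pow_near_pow_succ hk (a := n) (m := m) (by omega) (by omega)
    omega
  · rintro rfl
    exact ⟨n + 1, by omega⟩

lemma le_complexity_of_ones_eq_pow {k : ℕ} {w : ℕ → Fin 2} (hk : 1 < k)
    (hw : ∀ p, 0 < p → (w p = 1 ↔ ∃ m, k ^ m = p)) (n : ℕ) : n ≤ complexity w n := by
  classical
  have hsub : ↑((range n).image (unitWord n)) ⊆ (window w · n) '' Set.Ici 1 := by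
    intro u hu
    obtain ⟨j, hj, rfl⟩ := mem_image.1 hu
    have hj : j < n := mem_range.1 hj
    have hn : n < k ^ (n + 1) :=
      (Nat.lt_pow_self hk).trans_le (Nat.pow_le_pow_right (by omega) n.le_succ)
    exact ⟨k ^ (n + 1) - j, Set.mem_Ici.2 (by omega), window_eq_unitWord_at_pow hk hw hj⟩
  have hfin : ((window w · n) '' Set.Ici 1).Finite :=
    (List.finite_length_eq (Fin 2) n).subset (by rintro _ ⟨i, -, rfl⟩; exact length_window w i n)
  calc n = ((range n).image (unitWord n)).card := by
        rw [card_image_of_injOn (by simpa using unitWord_injOn n), card_range]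
    _ ≤ complexity w n := by
        rw [complexity_eq_ncard_image_window, ← Set.ncard_coe_finset]
        exact Set.ncard_le_ncard hsub hfin

lemma ones_eq_pow_of_oneDistrib {k : ℕ} {w : ℕ → Fin 2}
    (hG : OneDistrib w (fun n => if n = 0 then 0 else k ^ (n - 1))) :
    ∀ p, 0 < p → (w p = 1 ↔ ∃ m, k ^ m = p) := by
  intro p hp
  rw [hG.2.2 p hp]
  constructor
  · rintro ⟨i, hi, h⟩
    exact ⟨i - 1, by simpa [Nat.one_le_iff_ne_zero.1 hi] using h⟩
  · rintro ⟨m, rfl⟩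
    exact ⟨m + 1, by omega, by simp⟩

theorem stmt4 :
    ∃ c₁ c₂ : ℝ, 0 < c₁ ∧ 0 < c₂ ∧
      ∀ k : ℕ, 1 < k → ∀ w : ℕ → Fin 2,
        OneDistrib w (fun n => if n = 0 then 0 else k ^ (n - 1)) →
        ∃ N : ℕ, ∀ n, N ≤ n →
          c₁ * (n : ℝ) ≤ (complexity w n : ℝ) ∧ (complexity w n : ℝ) ≤ c₂ * (n : ℝ) := by
  refine ⟨1, 3, one_pos, by norm_num, fun k hk w hG => ⟨1, fun n hn => ?_⟩⟩
  have hw := ones_eq_pow_of_oneDistrib hG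
  have hlow := le_complexity_of_ones_eq_pow hk hw n
  have hup := complexity_le_of_two_mul_le (two_mul_le_of_ones_eq_pow hk hw) n
  constructor
  · rw [one_mul]
    exact_mod_cast hlow
  · exact_mod_cast (by omega : complexity w n ≤ 3 * n)
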